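/- Let γ = γ_{m₁,…,m_r} ∈ S_m be the product of the r directed cycles (1,…,m₁)(m₁+1,…,m₁+m₂)⋯(m₁+⋯+m_{r−1}+1,…,m). Suppose π, σ ∈ S_m satisfy π ≲ γ and σ ≲ γ (non-crossing on each block of the respective joins with γ), and π ∨ γ = σ ∨ γ as partitions. If π ≤ σ⁻¹γ, then σ ≤ γπ⁻¹. -/

import Mathlib

open Equiv

namespace ThirdOrderFree

variable {α : Type*}

/-- The setoid whose classes are the cycles (orbits) of a permutation. -/
def sameCycleSetoid (σ : Perm α) : Setoid α :=
  ⟨σ.SameCycle,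
    ⟨fun x => Equiv.Perm.SameCycle.refl σ x, fun h => h.symm, fun h h' => h.trans h'⟩⟩

/-- Number of cycles (orbits, including fixed points) of a permutation. -/
noncomputable def numCycles (σ : Perm α) : ℕ :=
  Nat.card (Quotient (sameCycleSetoid σ))

/-- The length `|σ| = n - #(σ)`. -/
noncomputable def len (σ : Perm α) : ℕ :=
  Nat.card α - numCycles σ

/-- Join of the cycle partitions of two permutations. -/
def joinSetoid (π σ : Perm α) : Setoid α :=
  sameCycleSetoid π ⊔ sameCycleSetoid σ

/-- Number of blocks of `π ∨ σ`. -/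
noncomputable def numBlocks (π σ : Perm α) : ℕ :=
  Nat.card (Quotient (joinSetoid π σ))

/-- `π ∨ σ` is the one-block partition. -/
def JoinTop (π σ : Perm α) : Prop :=
  ∀ x y : α, (joinSetoid π σ).r x y

/-- `π` is a non-crossing (annular) permutation with respect to `γ`. -/
def SNC (γ π : Perm α) : Prop :=
  JoinTop π γ ∧
    numCycles π + numCycles (π⁻¹ * γ) + numCycles γ = Nat.card α + 2

/-- `τ` separates the points of `N`: no cycle of `τ` contains two distinct points of `N`. -/
def Separates (τ : Perm α) (N : Set α) : Prop :=
  ∀ x ∈ N, ∀ y ∈ N, τ.SameCycle x y → x = y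

/-- The first-return map of `σ` on the set `{x | p x}`. -/
noncomputable def firstReturn (σ : Perm α) (p : α → Prop) (x : α) : α :=
  (σ ^ sInf {k : ℕ | 0 < k ∧ p ((σ ^ k) x)}) x

open Classical in
/-- The restriction of `σ` to `{x | p x}`: the unique permutation agreeing with the
first-return map (it exists whenever `α` is finite). -/
noncomputable def restrictPerm (σ : Perm α) (p : α → Prop) : Perm {x // p x} :=
  if h : ∃ e : Perm {x // p x}, ∀ x : {x // p x}, (e x : α) = firstReturn σ p (x : α)
  then h.choose else 1

/-- `π ≤ σ` : each cycle of `π` is contained in a cycle of `σ` and on each cycle of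
`σ` the restriction of `π` is a non-crossing permutation of that cycle. -/
def le' (π σ : Perm α) : Prop :=
  (∀ x y : α, π.SameCycle x y → σ.SameCycle x y) ∧
  ∀ x : α,
    numCycles (restrictPerm π (σ.SameCycle x)) +
      numCycles ((restrictPerm π (σ.SameCycle x))⁻¹ * restrictPerm σ (σ.SameCycle x)) =
      Nat.card {y // σ.SameCycle x y} + 1

/-- `π ≲ σ` : on each block of `π ∨ σ`, `π` is annular non-crossing w.r.t. `σ`. -/
def ncRel (π σ : Perm α) : Prop :=
  ∀ x : α,
    SNC (restrictPerm σ ((joinSetoid π σ).r x)) (restrictPerm π ((joinSetoid π σ).r x))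

/-- The permutation of `Σ i, Fin (n i)` rotating each block: the product of the
directed cycles `T i` of lengths `n i`. -/
def blockRotate {ι : Type*} (n : ι → ℕ) : Perm ((i : ι) × Fin (n i)) :=
  Equiv.sigmaCongrRight fun i => finRotate (n i)

/-- The first elements of the blocks. -/
def zeroSection {ι : Type*} (n : ι → ℕ) (hn : ∀ i, 0 < n i) :
    ι ≃ {x : (i : ι) × Fin (n i) // x.2.val = 0} where
  toFun i := ⟨⟨i, ⟨0, hn i⟩⟩, rfl⟩
  invFun x := x.1.1
  left_inv i := rfl
  right_inv := fun x => by
    obtain ⟨⟨i, j⟩, hj⟩ := x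
    exact Subtype.ext (congrArg (Sigma.mk i) (Fin.ext hj.symm))

/-- `π_{\vec n}` : merge the blocks `T i` along the cycles of `π`; within a block it
moves forward, and the last element of block `i` is sent to the first element of
block `π i`. -/
def mergePerm {ι : Type*} (n : ι → ℕ) (hn : ∀ i, 0 < n i) (π : Perm ι) :
    Perm ((i : ι) × Fin (n i)) :=
  (π.extendDomain (zeroSection n hn)) * blockRotate n

/-!
Both relations are statements about cycle counts. Summing the blockwise conditions gives
`#π + #(π⁻¹γ) + #γ = n + 2 #(π ∨ γ)` whenever `π ≲ γ`, and `π ≤ β` holds iff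
`#π + #(π⁻¹β) = n + #β`; the converse half of this rests on the genus inequality
`#a + #b + #(ab) ≤ n + 2 #(a ∨ b)`, proved by splitting off fixed points with transpositions.
As `γπ⁻¹` and `σ⁻¹γπ⁻¹` are conjugate to `π⁻¹γ` and `π⁻¹σ⁻¹γ`, the claim then becomes a linear
identity between cycle counts, given `#(π ∨ γ) = #(σ ∨ γ)`.
-/

def classPreserving (s : Setoid α) : Subgroup (Perm α) where
  carrier := {τ | ∀ z, s.r z (τ z)}
  mul_mem' {a b} ha hb z := s.trans' (hb z) (ha (b z))
  one_mem' z := s.refl' z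
  inv_mem' {τ} hτ z := s.symm' (by simpa using hτ (τ⁻¹ z))

section ClassPreserving

variable {s t : Setoid α} {τ : Perm α}

lemma classPreserving_mono (h : s ≤ t) : classPreserving s ≤ classPreserving t :=
  fun _ hτ z => h (hτ z)

lemma mem_classPreserving_iff_sameCycleSetoid_le :
    τ ∈ classPreserving s ↔ sameCycleSetoid τ ≤ s := by
  refine ⟨fun hτ x y ⟨k, hk⟩ => hk ▸ zpow_mem hτ k x, fun h z => h ?_⟩
  exact ⟨1, by simp⟩

lemma mem_classPreserving_sameCycleSetoid (τ : Perm α) :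
    τ ∈ classPreserving (sameCycleSetoid τ) :=
  mem_classPreserving_iff_sameCycleSetoid_le.mpr le_rfl

lemma swap_mem_classPreserving [DecidableEq α] {u v : α} (h : s.r u v) :
    swap u v ∈ classPreserving s := by
  intro w
  rw [swap_apply_def]
  split_ifs with hu hv
  · exact hu ▸ h
  · exact hv ▸ s.symm' h
  · exact s.refl' w

lemma joinSetoid_le_iff {a b : Perm α} :
    joinSetoid a b ≤ s ↔ a ∈ classPreserving s ∧ b ∈ classPreserving s := by
  simp only [joinSetoid, sup_le_iff, mem_classPreserving_iff_sameCycleSetoid_le]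

lemma left_mem_classPreserving_joinSetoid (a b : Perm α) :
    a ∈ classPreserving (joinSetoid a b) :=
  (joinSetoid_le_iff.mp le_rfl).1

lemma right_mem_classPreserving_joinSetoid (a b : Perm α) :
    b ∈ classPreserving (joinSetoid a b) :=
  (joinSetoid_le_iff.mp le_rfl).2

lemma sameCycleSetoid_mul_le_joinSetoid (a b : Perm α) :
    sameCycleSetoid (a * b) ≤ joinSetoid a b :=
  mem_classPreserving_iff_sameCycleSetoid_le.mp
    (mul_mem (left_mem_classPreserving_joinSetoid a b) (right_mem_classPreserving_joinSetoid a b))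

end ClassPreserving

section Quotients

variable {s t : Setoid α}

lemma card_quotient_le_of_le [Finite α] (h : s ≤ t) :
    Nat.card (Quotient t) ≤ Nat.card (Quotient s) :=
  Nat.card_le_card_of_surjective (Setoid.map_of_le h) (Quotient.ind fun z => ⟨⟦z⟧, rfl⟩)

lemma le_of_le_of_card_quotient_le [Finite α] (h : s ≤ t)
    (hcard : Nat.card (Quotient s) ≤ Nat.card (Quotient t)) : t ≤ s := by
  have hbij : Function.Bijective (Setoid.map_of_le h) :=
    (Function.Surjective.bijective_of_nat_card_le
      (Quotient.ind fun z => ⟨⟦z⟧, rfl⟩) hcard)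
  intro z w hzw
  exact Quotient.exact (hbij.1 (Quotient.sound hzw :
    Setoid.map_of_le h ⟦z⟧ = Setoid.map_of_le h ⟦w⟧))

open Classical in
noncomputable def mergeClasses (s : Setoid α) (u v : α) : Setoid α :=
  Setoid.ker fun z => if s.r z v then Quotient.mk s u else Quotient.mk s z

variable {u v : α}

lemma le_mergeClasses : s ≤ mergeClasses s u v := by
  classical
  intro z w hzw
  change (if s.r z v then _ else _) = (if s.r w v then _ else _)
  by_cases hz : s.r z v
  · rw [if_pos hz, if_pos (s.trans' (s.symm' hzw) hz)]
  · rw [if_neg hz, if_neg fun hw => hz (s.trans' hzw hw)]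
    exact Quotient.sound hzw

lemma mergeClasses_rel : (mergeClasses s u v).r u v := by
  classical
  change (if s.r u v then _ else _) = (if s.r v v then _ else _)
  rw [if_pos (s.refl' v), ite_self]

lemma mergeClasses_le (hs : s ≤ t) (h : t.r u v) : mergeClasses s u v ≤ t := by
  classical
  intro z w hzw
  change (if s.r z v then _ else _) = (if s.r w v then _ else _) at hzw
  split_ifs at hzw with hz hw hw
  · exact t.trans' (hs hz) (t.symm' (hs hw))
  · exact t.trans' (t.trans' (hs hz) (t.symm' h)) (hs (Quotient.exact hzw))
  · exact t.trans' (hs (Quotient.exact hzw)) (t.trans' h (t.symm' (hs hw)))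
  · exact hs (Quotient.exact hzw)

lemma card_quotient_mergeClasses_add_one [Finite α] (h : ¬ s.r u v) :
    Nat.card (Quotient (mergeClasses s u v)) + 1 = Nat.card (Quotient s) := by
  classical
  have hrange : Set.range (fun z => if s.r z v then Quotient.mk s u else Quotient.mk s z) =
      {Quotient.mk s v}ᶜ := by
    ext q
    induction q using Quotient.ind with | _ w => ?_
    simp only [Set.mem_range, Set.mem_compl_singleton_iff, ne_eq, Quotient.eq]
    refine ⟨?_, fun hw => ⟨w, by rw [if_neg hw]⟩⟩
    rintro ⟨z, hz⟩
    split_ifs at hz with hzv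
    · exact fun hw => h (s.trans' (Quotient.exact hz) hw)
    · exact fun hw => hzv (s.trans' (Quotient.exact hz) hw)
  rw [mergeClasses, Nat.card_congr (Setoid.quotientKerEquivRange _), hrange,
    Nat.card_coe_set_eq, ← Set.ncard_singleton (Quotient.mk s v),
    Set.ncard_compl_add_ncard]

lemma card_quotient_le_card_quotient_mergeClasses_add_one [Finite α] :
    Nat.card (Quotient s) ≤ Nat.card (Quotient (mergeClasses s u v)) + 1 := by
  by_cases h : s.r u v
  · rw [le_antisymm (mergeClasses_le le_rfl h) le_mergeClasses]
    exact Nat.le_succ _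
  · exact (card_quotient_mergeClasses_add_one h).ge

end Quotients

section Cycles

lemma numCycles_le_card [Finite α] (τ : Perm α) : numCycles τ ≤ Nat.card α :=
  Nat.card_le_card_of_surjective _ Quotient.mk_surjective

lemma numCycles_one : numCycles (1 : Perm α) = Nat.card α :=
  Nat.card_congr ((Quotient.congrRight (r' := ⊥) fun _ _ => Perm.sameCycle_one).trans
    Setoid.quotientBotEquiv)

lemma numCycles_conj (g τ : Perm α) : numCycles (g * τ * g⁻¹) = numCycles τ :=
  Nat.card_congr (Quotient.congr g.symm fun _ _ => Perm.sameCycle_conj)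

variable [DecidableEq α] {ρ : Perm α} {u v : α}

lemma swap_mul_pow_apply {N : ℕ}
    (hN : ∀ j, 0 < j → j < N → (ρ ^ j) v ≠ u ∧ (ρ ^ j) v ≠ v) :
    ∀ j, 0 < j → j ≤ N → ((swap u v * ρ) ^ j) v = swap u v ((ρ ^ j) v) := by
  intro j hj
  induction j, hj using Nat.le_induction with
  | base => intro; simp
  | succ j hj ih =>
    intro hjN
    obtain ⟨hu, hv⟩ := hN j hj (by omega)
    rw [pow_succ', Perm.mul_apply, ih (by omega), swap_apply_of_ne_of_ne hu hv, pow_succ',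
      Perm.mul_apply, Perm.mul_apply]

lemma sameCycle_swap_mul_of_not_sameCycle [Finite α] (h : ¬ ρ.SameCycle u v) :
    (swap u v * ρ).SameCycle v u := by
  have hex : ∃ k, 0 < k ∧ (ρ ^ k) v = v :=
    ⟨orderOf ρ, orderOf_pos ρ, by rw [pow_orderOf_eq_one]; rfl⟩
  obtain ⟨hpos, hret⟩ := Nat.find_spec hex
  have hN : ∀ j, 0 < j → j < Nat.find hex → (ρ ^ j) v ≠ u ∧ (ρ ^ j) v ≠ v :=
    fun j hj hjN => ⟨fun hu => h (Perm.SameCycle.symm ⟨j, by rw [zpow_natCast, hu]⟩),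
      fun hv => Nat.find_min hex hjN ⟨hj, hv⟩⟩
  exact ⟨Nat.find hex, by
    rw [zpow_natCast, swap_mul_pow_apply hN _ hpos le_rfl, hret, swap_apply_right]⟩

lemma sameCycleSetoid_le_swap_mul (h : (swap u v * ρ).SameCycle u v) :
    sameCycleSetoid ρ ≤ sameCycleSetoid (swap u v * ρ) := by
  have := mul_mem (swap_mem_classPreserving h)
    (mem_classPreserving_sameCycleSetoid (swap u v * ρ))
  rwa [swap_mul_self_mul, mem_classPreserving_iff_sameCycleSetoid_le] at this

lemma sameCycleSetoid_swap_mul [Finite α] (h : ¬ ρ.SameCycle u v) :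
    sameCycleSetoid (swap u v * ρ) = mergeClasses (sameCycleSetoid ρ) u v := by
  have hvu := sameCycle_swap_mul_of_not_sameCycle h
  refine le_antisymm ?_ (mergeClasses_le (sameCycleSetoid_le_swap_mul hvu.symm) hvu.symm)
  rw [← mem_classPreserving_iff_sameCycleSetoid_le]
  exact mul_mem (swap_mem_classPreserving mergeClasses_rel)
    (classPreserving_mono le_mergeClasses (mem_classPreserving_sameCycleSetoid ρ))

lemma numCycles_swap_mul_add_one [Finite α] (h : ¬ ρ.SameCycle u v) :
    numCycles (swap u v * ρ) + 1 = numCycles ρ := by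
  rw [numCycles, sameCycleSetoid_swap_mul h]
  exact card_quotient_mergeClasses_add_one h

lemma numCycles_swap_mul_le [Finite α] (ρ : Perm α) (u v : α) :
    numCycles (swap u v * ρ) ≤ numCycles ρ + 1 := by
  by_cases h : (swap u v * ρ).SameCycle u v
  · exact (card_quotient_le_of_le (sameCycleSetoid_le_swap_mul h)).trans (Nat.le_succ _)
  · have := numCycles_swap_mul_add_one h
    rw [swap_mul_self_mul] at this
    omega

end Cycles

lemma numBlocks_one_left (b : Perm α) : numBlocks 1 b = numCycles b := by
  rw [numBlocks, numCycles, le_antisymm (joinSetoid_le_iff.mpr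
    ⟨one_mem _, mem_classPreserving_sameCycleSetoid b⟩) le_sup_right]

section Blocks

variable [DecidableEq α] [Finite α] {ρ : Perm α} {u v : α}

lemma numBlocks_le_numBlocks_swap_mul_add_one (b : Perm α) :
    numBlocks ρ b ≤ numBlocks (swap u v * ρ) b + 1 := by
  have hle : joinSetoid (swap u v * ρ) b ≤ mergeClasses (joinSetoid ρ b) u v :=
    joinSetoid_le_iff.mpr
      ⟨mul_mem (swap_mem_classPreserving mergeClasses_rel)
        (classPreserving_mono le_mergeClasses (left_mem_classPreserving_joinSetoid ρ b)),
      classPreserving_mono le_mergeClasses (right_mem_classPreserving_joinSetoid ρ b)⟩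
  exact card_quotient_le_card_quotient_mergeClasses_add_one.trans
    (Nat.add_le_add_right (card_quotient_le_of_le hle) 1)

lemma numBlocks_le_numBlocks_swap_mul {b : Perm α} (h : (joinSetoid ρ b).r u v) :
    numBlocks ρ b ≤ numBlocks (swap u v * ρ) b :=
  card_quotient_le_of_le <| joinSetoid_le_iff.mpr
    ⟨mul_mem (swap_mem_classPreserving h) (left_mem_classPreserving_joinSetoid ρ b),
      right_mem_classPreserving_joinSetoid ρ b⟩

end Blocks

/-- Genus inequality; induction on `n - #a`, splitting `x` off its cycle by `a = (x a(x)) a'`. -/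
theorem numCycles_add_numCycles_add_numCycles_mul_le [Finite α] (a b : Perm α) :
    numCycles a + numCycles b + numCycles (a * b) ≤ Nat.card α + 2 * numBlocks a b := by
  classical
  induction hk : Nat.card α - numCycles a using Nat.strong_induction_on generalizing a with
  | _ k ih =>
  by_cases ha : a = 1
  · subst ha
    rw [one_mul, numCycles_one, numBlocks_one_left]
    omega
  obtain ⟨x, hx⟩ : ∃ x, a x ≠ x := by
    by_contra! hfix
    exact ha (Equiv.ext hfix)
  set a' := swap x (a x) * a
  have ha' : swap x (a x) * a' = a := swap_mul_self_mul _ _ a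
  have hsplit : numCycles a + 1 = numCycles a' := by
    have hfix : a' x = x := by simp [a']
    have := numCycles_swap_mul_add_one (u := x) (v := a x) (ρ := a')
      fun hxy => hx (hxy.eq_of_left hfix).symm
    rwa [ha'] at this
  have hIH := ih _ (by have := numCycles_le_card a'; omega) a' rfl
  have hmul : swap x (a x) * (a' * b) = a * b := by rw [← mul_assoc, ha']
  by_cases hxb : (joinSetoid a' b).r x (a x)
  · have hcyc := numCycles_swap_mul_le (a' * b) x (a x)
    have hblk := numBlocks_le_numBlocks_swap_mul hxb
    rw [hmul] at hcyc
    rw [ha'] at hblk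
    omega
  · have hcyc := numCycles_swap_mul_add_one
      fun hxy => hxb (sameCycleSetoid_mul_le_joinSetoid a' b hxy)
    have hblk := numBlocks_le_numBlocks_swap_mul_add_one (ρ := a') (u := x) (v := a x) b
    rw [hmul] at hcyc
    rw [ha'] at hblk
    omega

theorem numCycles_add_numCycles_inv_mul_le [Finite α] (a c : Perm α) :
    numCycles a + numCycles (a⁻¹ * c) ≤ Nat.card α + numCycles c := by
  have h := numCycles_add_numCycles_add_numCycles_mul_le a (a⁻¹ * c)
  have hblk : numBlocks a (a⁻¹ * c) ≤ numCycles c := by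
    have := card_quotient_le_of_le (sameCycleSetoid_mul_le_joinSetoid a (a⁻¹ * c))
    rwa [mul_inv_cancel_left] at this
  rw [mul_inv_cancel_left] at h
  omega

section Restrict

variable {s : Setoid α} {τ : Perm α}

lemma restrictPerm_eq_subtypePerm (τ : Perm α) (p : α → Prop) (hp : ∀ x, p (τ x) ↔ p x) :
    restrictPerm τ p = τ.subtypePerm hp := by
  classical
  have hfirst : ∀ x : {x // p x}, firstReturn τ p x = τ x := by
    intro x
    have h1 : 1 ∈ {k : ℕ | 0 < k ∧ p ((τ ^ k) x)} := ⟨one_pos, by simpa using (hp x).2 x.2⟩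
    rw [firstReturn, le_antisymm (Nat.sInf_le h1) (Nat.sInf_mem ⟨1, h1⟩).1, pow_one]
  have hex : ∃ e : Perm {x // p x}, ∀ x : {x // p x}, (e x : α) = firstReturn τ p x :=
    ⟨τ.subtypePerm hp, fun x => (hfirst x).symm⟩
  rw [restrictPerm, dif_pos hex]
  ext x
  rw [hex.choose_spec, hfirst, Perm.subtypePerm_apply]

lemma rel_apply_iff (hτ : τ ∈ classPreserving s) (x y : α) : s.r x (τ y) ↔ s.r x y :=
  ⟨fun h => s.trans' h (s.symm' (hτ y)), fun h => s.trans' h (hτ y)⟩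

lemma restrictPerm_inv_mul {σ β : Perm α} (hσ : σ ∈ classPreserving s)
    (hβ : β ∈ classPreserving s) (x : α) :
    (restrictPerm σ (s.r x))⁻¹ * restrictPerm β (s.r x) = restrictPerm (σ⁻¹ * β) (s.r x) := by
  rw [restrictPerm_eq_subtypePerm σ _ (rel_apply_iff hσ x),
    restrictPerm_eq_subtypePerm β _ (rel_apply_iff hβ x),
    restrictPerm_eq_subtypePerm _ _ (rel_apply_iff (mul_mem (inv_mem hσ) hβ) x)]
  rfl

lemma numCycles_restrictPerm_sameCycle (β : Perm α) (x : α) :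
    numCycles (restrictPerm β (β.SameCycle x)) = 1 := by
  rw [restrictPerm_eq_subtypePerm β (β.SameCycle x)
      (rel_apply_iff (mem_classPreserving_sameCycleSetoid β) x),
    numCycles, Nat.card_eq_one_iff_unique]
  refine ⟨⟨Quotient.ind₂ fun a b => Quotient.sound ?_⟩, ⟨⟦⟨x, Perm.SameCycle.refl β x⟩⟧⟩⟩
  exact Perm.sameCycle_subtypePerm.mpr (a.2.symm.trans b.2)

lemma card_eq_sum [Finite α] (s : Setoid α) [Fintype (Quotient s)] :
    Nat.card α = ∑ q : Quotient s, Nat.card {y // s.r q.out y} := by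
  rw [← Nat.card_congr (Equiv.sigmaFiberEquiv (Quotient.mk s)), Nat.card_sigma]
  refine Finset.sum_congr rfl fun q _ => Nat.card_congr (Equiv.subtypeEquivRight fun y => ?_)
  exact Quotient.mk_eq_iff_out.trans ⟨s.symm', s.symm'⟩

lemma numCycles_eq_sum [Finite α] (s : Setoid α) [Fintype (Quotient s)]
    (hτ : τ ∈ classPreserving s) :
    numCycles τ = ∑ q : Quotient s, numCycles (restrictPerm τ (s.r q.out)) := by
  rw [numCycles, ← Nat.card_congr (Setoid.sigmaQuotientEquivOfLe
    (mem_classPreserving_iff_sameCycleSetoid_le.mp hτ)), Nat.card_sigma]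
  refine Finset.sum_congr rfl fun q _ => ?_
  rw [restrictPerm_eq_subtypePerm τ _ (rel_apply_iff hτ q.out)]
  refine Nat.card_congr (Quotient.congr (Equiv.subtypeEquivRight fun y => ?_) fun a b => ?_)
  · exact Quotient.mk_eq_iff_out.trans ⟨s.symm', s.symm'⟩
  · change τ.SameCycle _ _ ↔ Perm.SameCycle _ _ _
    rw [Perm.sameCycle_subtypePerm]
    rfl

lemma numCycles_add_numCycles_inv_mul_eq_sum [Finite α] (s : Setoid α) [Fintype (Quotient s)]
    {σ β : Perm α} (hσ : σ ∈ classPreserving s) (hβ : β ∈ classPreserving s) :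
    numCycles σ + numCycles (σ⁻¹ * β) = ∑ q : Quotient s,
      (numCycles (restrictPerm σ (s.r q.out)) +
        numCycles ((restrictPerm σ (s.r q.out))⁻¹ * restrictPerm β (s.r q.out))) := by
  rw [numCycles_eq_sum s hσ, numCycles_eq_sum s (mul_mem (inv_mem hσ) hβ),
    ← Finset.sum_add_distrib]
  simp only [restrictPerm_inv_mul hσ hβ]

end Restrict

lemma card_add_numCycles_eq_sum [Finite α] (β : Perm α)
    [Fintype (Quotient (sameCycleSetoid β))] :
    Nat.card α + numCycles β =
      ∑ q : Quotient (sameCycleSetoid β), (Nat.card {y // β.SameCycle q.out y} + 1) := by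
  rw [card_eq_sum (sameCycleSetoid β), Finset.sum_add_distrib, Finset.sum_const,
    Finset.card_univ, smul_eq_mul, mul_one, numCycles, Nat.card_eq_fintype_card]
  rfl

theorem le'_iff_numCycles [Finite α] {σ β : Perm α} :
    le' σ β ↔ numCycles σ + numCycles (σ⁻¹ * β) = Nat.card α + numCycles β := by
  have := Fintype.ofFinite (Quotient (sameCycleSetoid β))
  have hβ := mem_classPreserving_sameCycleSetoid β
  constructor
  · intro h
    have hσ : σ ∈ classPreserving (sameCycleSetoid β) := fun z => h.1 z (σ z) ⟨1, by simp⟩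
    rw [numCycles_add_numCycles_inv_mul_eq_sum _ hσ hβ, card_add_numCycles_eq_sum]
    exact Finset.sum_congr rfl fun q _ => h.2 q.out
  · intro h
    -- By the genus inequality `σ ∨ σ⁻¹β` has at least `#β` blocks, and it is coarser than `β`.
    have hjoin : joinSetoid σ (σ⁻¹ * β) ≤ sameCycleSetoid β := by
      have hgenus := numCycles_add_numCycles_add_numCycles_mul_le σ (σ⁻¹ * β)
      have hle := sameCycleSetoid_mul_le_joinSetoid σ (σ⁻¹ * β)
      rw [mul_inv_cancel_left] at hgenus hle
      exact le_of_le_of_card_quotient_le hle (by rw [← numBlocks, ← numCycles]; omega)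
    have hσ := (joinSetoid_le_iff.mp hjoin).1
    have hblock : ∀ x, numCycles (restrictPerm σ (β.SameCycle x)) +
        numCycles ((restrictPerm σ (β.SameCycle x))⁻¹ * restrictPerm β (β.SameCycle x)) ≤
        Nat.card {y // β.SameCycle x y} + 1 := fun x => by
      simpa only [numCycles_restrictPerm_sameCycle] using
        numCycles_add_numCycles_inv_mul_le (restrictPerm σ (β.SameCycle x))
          (restrictPerm β (β.SameCycle x))
    rw [numCycles_add_numCycles_inv_mul_eq_sum _ hσ hβ, card_add_numCycles_eq_sum,
      Finset.sum_eq_sum_iff_of_le fun q _ => hblock q.out] at h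
    refine ⟨fun x y hxy => mem_classPreserving_iff_sameCycleSetoid_le.mp hσ hxy, fun x => ?_⟩
    have hout : β.SameCycle (Quotient.mk (sameCycleSetoid β) x).out x :=
      Quotient.mk_out (s := sameCycleSetoid β) x
    have hx : β.SameCycle x = β.SameCycle (Quotient.mk (sameCycleSetoid β) x).out :=
      funext fun y => propext ⟨hout.trans, hout.symm.trans⟩
    rw [hx]
    exact h _ (Finset.mem_univ _)

theorem ncRel.numCycles_add_numCycles_inv_mul_add_numCycles [Finite α] {π γ : Perm α}
    (hπ : ncRel π γ) :
    numCycles π + numCycles (π⁻¹ * γ) + numCycles γ = Nat.card α + 2 * numBlocks π γ := by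
  set s := joinSetoid π γ
  have := Fintype.ofFinite (Quotient s)
  have hπs := left_mem_classPreserving_joinSetoid π γ
  have hγs := right_mem_classPreserving_joinSetoid π γ
  calc numCycles π + numCycles (π⁻¹ * γ) + numCycles γ
      = ∑ q : Quotient s, (numCycles (restrictPerm π (s.r q.out)) +
          numCycles ((restrictPerm π (s.r q.out))⁻¹ * restrictPerm γ (s.r q.out)) +
          numCycles (restrictPerm γ (s.r q.out))) := by
        rw [numCycles_add_numCycles_inv_mul_eq_sum s hπs hγs, numCycles_eq_sum s hγs,
          ← Finset.sum_add_distrib]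
    _ = ∑ q : Quotient s, (Nat.card {y // s.r q.out y} + 2) :=
        Finset.sum_congr rfl fun q _ => (hπ q.out).2
    _ = Nat.card α + 2 * numBlocks π γ := by
        rw [Finset.sum_add_distrib, ← card_eq_sum, Finset.sum_const, Finset.card_univ,
          smul_eq_mul, mul_comm, ← Nat.card_eq_fintype_card]
        rfl

theorem stmt5_general {r : ℕ} (m : Fin r → ℕ)
    (γ : Equiv.Perm ((i : Fin r) × Fin (m i)))
    (π σ : Equiv.Perm ((i : Fin r) × Fin (m i)))
    (hπ : ncRel π γ) (hσ : ncRel σ γ)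
    (hjoin : ∀ x y, (joinSetoid π γ).r x y ↔ (joinSetoid σ γ).r x y)
    (h : le' π (σ⁻¹ * γ)) :
    le' σ (γ * π⁻¹) := by
  have hπγ := hπ.numCycles_add_numCycles_inv_mul_add_numCycles
  have hσγ := hσ.numCycles_add_numCycles_inv_mul_add_numCycles
  have hblocks : numBlocks π γ = numBlocks σ γ := by
    rw [numBlocks, numBlocks, Setoid.ext hjoin]
  have hconj₁ : numCycles (γ * π⁻¹) = numCycles (π⁻¹ * γ) := by
    rw [← numCycles_conj γ (π⁻¹ * γ)]
    group
  have hconj₂ : numCycles (σ⁻¹ * (γ * π⁻¹)) = numCycles (π⁻¹ * (σ⁻¹ * γ)) := by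
    rw [← numCycles_conj π (π⁻¹ * (σ⁻¹ * γ))]
    group
  rw [le'_iff_numCycles] at h ⊢
  omega

/-- if `π ≲ γ`, `σ ≲ γ`, `π ∨ γ = σ ∨ γ` and `π ≤ σ⁻¹γ`, then
`σ ≤ γπ⁻¹`. -/
theorem stmt5 {r : ℕ} (m : Fin r → ℕ)
    (γ : Equiv.Perm ((i : Fin r) × Fin (m i))) (hγ : γ = blockRotate m)
    (π σ : Equiv.Perm ((i : Fin r) × Fin (m i)))
    (hπ : ncRel π γ) (hσ : ncRel σ γ)
    (hjoin : ∀ x y, (joinSetoid π γ).r x y ↔ (joinSetoid σ γ).r x y)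
    (h : le' π (σ⁻¹ * γ)) :
    le' σ (γ * π⁻¹) :=
  stmt5_general m γ π σ hπ hσ hjoin h

end ThirdOrderFree
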